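/- Let A ∈ M_n(ℤ) be non-singular and let T ∈ M_n(ℤ) with det T = ±1. Then the following are equivalent: (i) for every m ∈ ℕ there exists k ∈ ℕ such that the matrix A^{-m}·T·A^{k}, computed in M_n(ℚ), has integer entries; (ii) the transpose Tᵗ maps G_{Aᵗ} into G_{Aᵗ}. (Condition (i) says that T belongs to the linear representation group N⃗(X_A) of the ℤ^n-odometer X_A defined by A.) -/

import Mathlib

open Matrix Polynomial

noncomputable section

/-- The matrix `A` viewed over `ℚ`. -/
def Aq {n : ℕ} (A : Matrix (Fin n) (Fin n) ℤ) : Matrix (Fin n) (Fin n) ℚ :=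
  A.map (Int.cast : ℤ → ℚ)

/-- The group `G_A = {A^k x : x ∈ ℤ^n, k ∈ ℤ} ⊆ ℚ^n`. -/
def GA {n : ℕ} (A : Matrix (Fin n) (Fin n) ℤ) : Set (Fin n → ℚ) :=
  {v | ∃ (k : ℤ) (x : Fin n → ℤ), v = (Aq A ^ k) *ᵥ fun i => ((x i : ℚ))}

lemma Aq_pow {n : ℕ} (M : Matrix (Fin n) (Fin n) ℤ) (k : ℕ) :
    Aq (M ^ k) = (Aq M) ^ k := by
  exact map_pow (RingHom.mapMatrix (Int.castRingHom ℚ)) M k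

lemma Aq_mulVec {n : ℕ} (M : Matrix (Fin n) (Fin n) ℤ) (x : Fin n → ℤ) :
    (Aq M) *ᵥ (fun i => ((x i : ℚ))) = fun i => (((M *ᵥ x) i : ℤ) : ℚ) := by
  funext i
  have := (Int.castRingHom ℚ).map_mulVec M x i
  simpa [Aq, Function.comp_def] using this.symm

lemma Aq_transpose {n : ℕ} (M : Matrix (Fin n) (Fin n) ℤ) :
    Aq Mᵀ = (Aq M)ᵀ := Matrix.transpose_map

/-- for `T ∈ GL_n(ℤ)`, `T` belongs to the linear representation group
`N⃗(X_A)` iff `Tᵗ` maps `G_{Aᵗ}` into itself. -/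
theorem stmt16 (n : ℕ) (A : Matrix (Fin n) (Fin n) ℤ) (hA : A.det ≠ 0)
    (T : Matrix (Fin n) (Fin n) ℤ) (hT : T.det = 1 ∨ T.det = -1) :
    (∀ m : ℕ, ∃ k : ℕ, ∀ i j, ∃ z : ℤ,
        (((Aq A)⁻¹ ^ m * T.map (Int.cast : ℤ → ℚ) * (Aq A) ^ k) i j) = (z : ℚ)) ↔
      (∀ v ∈ GA Aᵀ, ((T.map (Int.cast : ℤ → ℚ))ᵀ) *ᵥ v ∈ GA Aᵀ) := by
  classical
  set B := Aq A with hBdef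
  set Tq := T.map (Int.cast : ℤ → ℚ) with hTq
  have hdetB : B.det = (A.det : ℚ) := by
    exact ((Int.castRingHom ℚ).map_det A).symm
  have hB : IsUnit B.det := by
    rw [hdetB]
    exact isUnit_iff_ne_zero.mpr (by exact_mod_cast hA)
  have hBT : IsUnit (Bᵀ).det := by rwa [Matrix.det_transpose]
  have hAT : IsUnit (Aq Aᵀ).det := by rw [Aq_transpose]; exact hBT
  -- `(Aq Aᵀ) ^ k = (B ^ k)ᵀ` for all integers k
  have hpowT : ∀ k : ℤ, (Aq Aᵀ) ^ k = (B ^ k)ᵀ := fun k => by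
    rw [Aq_transpose, Matrix.transpose_zpow]
  -- inverse-power identity
  have hinvpow : ∀ m : ℕ, B⁻¹ ^ m = B ^ (-(m : ℤ)) := fun m => by
    rw [Matrix.inv_pow', ← Matrix.zpow_neg_natCast]
  constructor
  · -- (i) → (ii)
    intro h v hv
    obtain ⟨k, x, rfl⟩ := hv
    rw [hpowT k, Matrix.mulVec_mulVec, ← Matrix.transpose_mul]
    rcases le_or_gt 0 k with hk | hk
    · -- nonnegative exponent: everything is integral
      lift k to ℕ using hk
      refine ⟨0, (A ^ k * T)ᵀ *ᵥ x, ?_⟩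
      have : B ^ (k : ℤ) * Tq = Aq (A ^ k * T) := by
        rw [zpow_natCast, ← Aq_pow]
        exact (map_mul (RingHom.mapMatrix (Int.castRingHom ℚ)) (A ^ k) T).symm
      rw [this, zpow_zero, Matrix.one_mulVec, ← Aq_transpose, Aq_mulVec]
    · -- negative exponent: use hypothesis (i)
      set m : ℕ := (-k).toNat with hm
      have hmk : k = -(m : ℤ) := by omega
      obtain ⟨K, hK⟩ := h m
      -- the integer matrix Z with `B⁻¹ ^ m * Tq * B ^ K = Z` over ℚ
      set Z : Matrix (Fin n) (Fin n) ℤ := fun i j => (hK i j).choose with hZ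
      have hZeq : B⁻¹ ^ m * Tq * B ^ K = Aq Z := by
        ext i j
        exact (hK i j).choose_spec
      have key : B ^ k * Tq = Aq Z * B ^ (-(K : ℤ)) := by
        have h1 : B ^ k * Tq * B ^ (K : ℤ) = Aq Z := by
          rw [hmk, ← hinvpow, zpow_natCast]; exact hZeq
        calc B ^ k * Tq = B ^ k * Tq * (B ^ (K : ℤ) * B ^ (-(K : ℤ))) := by
              rw [← Matrix.zpow_add hB, add_neg_cancel, zpow_zero, mul_one]
          _ = (B ^ k * Tq * B ^ (K : ℤ)) * B ^ (-(K : ℤ)) := by rw [← mul_assoc]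
          _ = Aq Z * B ^ (-(K : ℤ)) := by rw [h1]
      refine ⟨-(K : ℤ), Zᵀ *ᵥ x, ?_⟩
      rw [key, Matrix.transpose_mul, ← Matrix.mulVec_mulVec, ← Aq_transpose, Aq_mulVec,
        hpowT, Matrix.transpose_zpow]
  · -- (ii) → (i)
    intro h m
    -- apply (ii) to the columns of `(Aq Aᵀ) ^ (-m)`
    have hv : ∀ i : Fin n, (Aq Aᵀ ^ (-(m : ℤ)) *ᵥ fun j => (((Pi.single i 1 : Fin n → ℤ) j : ℚ)))
        ∈ GA Aᵀ := by
      intro i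
      refine ⟨-(m : ℤ), Pi.single i 1, ?_⟩
      rfl
    choose kk xx hxx using fun i => h _ (hv i)
    set K : ℕ := Finset.univ.sup fun i : Fin n => (-(kk i)).toNat with hKdef
    have hKk : ∀ i, 0 ≤ (K : ℤ) + kk i := by
      intro i
      have : (-(kk i)).toNat ≤ K :=
        Finset.le_sup (f := fun i => (-(kk i)).toNat) (Finset.mem_univ i)
      omega
    refine ⟨K, fun i j => ?_⟩
    set M : Matrix (Fin n) (Fin n) ℚ := B⁻¹ ^ m * Tq * B ^ K with hM
    -- row i of M via a single vector
    have hcol : Mᵀ *ᵥ Pi.single i 1 = M i := by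
      rw [Matrix.mulVec_single_one]; rfl
    have hsingle : (fun j => (((Pi.single i 1 : Fin n → ℤ) j : ℚ))) = Pi.single i (1 : ℚ) := by
      funext j
      by_cases hji : j = i
      · subst hji; simp
      · simp [Pi.single_apply, hji]
    set p : ℕ := ((K : ℤ) + kk i).toNat with hp
    have hpe : ((K : ℤ) + kk i) = (p : ℤ) := by
      rw [hp, Int.toNat_of_nonneg (hKk i)]
    have hMT : Mᵀ = (Aq Aᵀ) ^ (K : ℤ) * (Tqᵀ * (Aq Aᵀ) ^ (-(m : ℤ))) := by
      rw [hM, Matrix.transpose_mul, Matrix.transpose_mul, hinvpow, hpowT, hpowT,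
        zpow_natCast]
    have : Mᵀ *ᵥ Pi.single i 1 = fun j => (((Aᵀ ^ p *ᵥ xx i) j : ℤ) : ℚ) := by
      rw [hMT, ← Matrix.mulVec_mulVec, ← Matrix.mulVec_mulVec, ← hsingle, hxx i,
        Matrix.mulVec_mulVec, ← Matrix.zpow_add hAT (K : ℤ) (kk i), hpe, zpow_natCast,
        ← Aq_pow, Aq_mulVec]
    have := congrFun this j
    rw [hcol] at this
    exact ⟨(Aᵀ ^ p *ᵥ xx i) j, this⟩
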